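/- Let G = (L, Σ, δ, O) be a POMDP, T ⊆ L, and l ∈ L. If there exists an observation-based strategy that is positive winning for coBüchi(T) from l, then there exists a pure observation-based finite-memory strategy with memory of size at most (|L| + 1) · 2^{|L|} that is positive winning for coBüchi(T) from l. -/

import Mathlib

open scoped ENNReal

/-- A partially-observable Markov decision process (POMDP) with states `L`,
actions `A` and observations `O`: a probabilistic transition function and an
observation function (the observations partition the state space). -/
structure POMDP (L : Type) (A : Type) (O : Type) where
  δ : L → A → PMF L
  obs : L → O

namespace POMDP

variable {L A O : Type}

/-- A (randomized) strategy: given the initial state and the history of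
(action, state) steps played so far, it chooses a distribution on actions. -/
abbrev Strategy (L A : Type) := L → List (A × L) → PMF A

/-- The sequence of states visited along a finite prefix. -/
def statesOf (l : L) (h : List (A × L)) : List L := l :: h.map Prod.snd

/-- Auxiliary probability of a finite prefix, for a strategy `π` given as a
function of the remaining history. -/
noncomputable def prefProbAux (M : POMDP L A O) :
    (List (A × L) → PMF A) → L → List (A × L) → ℝ≥0∞
  | _, _, [] => 1
  | π, l, (a, l') :: h =>
      π [] a * M.δ l a l' * M.prefProbAux (fun h' => π ((a, l') :: h')) l' h

/-- The probability, under strategy `α` from state `l`, that the play starts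
with the finite prefix `h` of (action, state) steps. -/
noncomputable def prefProb (M : POMDP L A O) (α : Strategy L A) (l : L)
    (h : List (A × L)) : ℝ≥0∞ :=
  M.prefProbAux (α l) l h

/-- A prefix is consistent with `α` from `l` if it has positive probability. -/
def Consistent (M : POMDP L A O) (α : Strategy L A) (l : L) (h : List (A × L)) : Prop :=
  0 < M.prefProb α l h

/-- The probability, under strategy `α` from state `l`, that the length-`n`
prefix of the play satisfies the predicate `P`. -/
noncomputable def horizonProb (M : POMDP L A O) [Fintype L] [Fintype A]
    (α : Strategy L A) (l : L) (n : ℕ) (P : List (A × L) → Prop) : ℝ≥0∞ :=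
  ∑ f : Fin n → A × L,
    Set.indicator {g : Fin n → A × L | P (List.ofFn g)}
      (fun g => M.prefProb α l (List.ofFn g)) f

/-- `Pr_l^α(Reach(T))`: probability that the play visits a state of `T`
(as the increasing limit of the finite-horizon reachability probabilities). -/
noncomputable def reachProb (M : POMDP L A O) [Fintype L] [Fintype A]
    (α : Strategy L A) (l : L) (T : Set L) : ℝ≥0∞ :=
  ⨆ n, M.horizonProb α l n (fun h => ∃ s ∈ statesOf l h, s ∈ T)

/-- `Pr_l^α(Safe(T))`: probability that all states of the play lie in `T`
(as the decreasing limit of the finite-horizon safety probabilities). -/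
noncomputable def safeProb (M : POMDP L A O) [Fintype L] [Fintype A]
    (α : Strategy L A) (l : L) (T : Set L) : ℝ≥0∞ :=
  ⨅ n, M.horizonProb α l n (fun h => ∀ s ∈ statesOf l h, s ∈ T)

/-- `Pr_l^α(Until(T₁,T₂))`: probability that the play visits `T₂` at some
position `k` with all positions `≤ k` in `T₁`. -/
noncomputable def untilProb (M : POMDP L A O) [Fintype L] [Fintype A]
    (α : Strategy L A) (l : L) (T₁ T₂ : Set L) : ℝ≥0∞ :=
  ⨆ n, M.horizonProb α l n (fun h => ∃ k, ∃ hk : k < (statesOf l h).length,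
      (statesOf l h).get ⟨k, hk⟩ ∈ T₂ ∧
      ∀ j, ∀ hj : j < (statesOf l h).length, j ≤ k → (statesOf l h).get ⟨j, hj⟩ ∈ T₁)

/-- `Pr_l^α(coBüchi(T))`: probability that from some point on all states of
the play lie in `T`. -/
noncomputable def coBuchiProb (M : POMDP L A O) [Fintype L] [Fintype A]
    (α : Strategy L A) (l : L) (T : Set L) : ℝ≥0∞ :=
  ⨆ k, ⨅ n, M.horizonProb α l n (fun h =>
    ∀ j, ∀ hj : j < (statesOf l h).length, k ≤ j → (statesOf l h).get ⟨j, hj⟩ ∈ T)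

/-- `Pr_l^α(Büchi(T))`: probability that the play visits `T` infinitely often. -/
noncomputable def buchiProb (M : POMDP L A O) [Fintype L] [Fintype A]
    (α : Strategy L A) (l : L) (T : Set L) : ℝ≥0∞ :=
  ⨅ k, ⨆ n, M.horizonProb α l n (fun h =>
    ∃ j, ∃ hj : j < (statesOf l h).length, k ≤ j ∧ (statesOf l h).get ⟨j, hj⟩ ∈ T)

/-- A strategy is observation-based if it plays the same distribution after any
two prefixes with the same sequences of observations and of actions. -/
def ObservationBased (M : POMDP L A O) (α : Strategy L A) : Prop :=
  ∀ l l' (h h' : List (A × L)), M.obs l = M.obs l' →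
    h.map Prod.fst = h'.map Prod.fst →
    h.map (fun p => M.obs p.2) = h'.map (fun p => M.obs p.2) →
    α l h = α l' h'

/-- A strategy is pure if it always plays a Dirac distribution. -/
def PureStrategy (α : Strategy L A) : Prop := ∀ l h, ∃ a, α l h = PMF.pure a

/-- Edge of the underlying graph of the POMDP. -/
def Edge (M : POMDP L A O) (l l' : L) : Prop := ∃ a, 0 < M.δ l a l'

/-- Reachability in the underlying graph of the POMDP. -/
def ReachableFrom (M : POMDP L A O) (l l' : L) : Prop :=
  Relation.ReflTransGen M.Edge l l'

/-- The memory state reached by a memory-update function `u` (together with the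
current state) after running through a prefix. -/
def memRun (M : POMDP L A O) {Mem : Type} (u : Mem → O → A → Mem) :
    Mem → L → List (A × L) → Mem × L
  | m, l, [] => (m, l)
  | m, l, (a, l') :: h => M.memRun u (u m (M.obs l) a) l' h

/-- The (observation-based) strategy induced by a finite-memory machine given by
memory-update function `u`, next-action function `next` and initial memory `m0`. -/
def fmStrategy (M : POMDP L A O) {Mem : Type} (u : Mem → O → A → Mem)
    (next : Mem → O → PMF A) (m0 : Mem) : Strategy L A :=
  fun l h =>
    let p := M.memRun u m0 l h
    next p.1 (M.obs p.2)

/-- The distribution choosing `x` and `y` with probability 1/2 each. -/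
noncomputable def half (x y : L) : PMF L :=
  (PMF.uniformOfFintype Bool).map (fun b => if b then x else y)

end POMDP

/-!
Call a belief (a set of states the controller cannot tell apart) safe if some observation-based
strategy keeps the play in `T` forever with probability one from each of its states. The safe
beliefs are the limit of the descending iteration "`B ⊆ T` and some action sends `B`, under every
observation, to a belief safe for one step fewer", which stabilizes after finitely many rounds `I`.

If no consistent prefix of an observation-based strategy ends in a state `t` with `{t}` safe, then
after every consistent prefix the play leaves `T` within `I` steps with probability at least
`c ^ I`, where `c > 0` is `1 / |A|` (a most likely action) times the least positive transition
probability. So the probability of staying in `T` from any fixed step on decays geometrically, and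
the strategy is not positive winning.

Conversely, if a consistent prefix reaches `t` with `{t}` safe, shorten it to a path of length
`< |L|`. A pure strategy that first replays the actions of this path (a counter up to `|L|`) and then
tracks the belief (a subset of `L`) and plays a safe action follows the path with positive
probability and afterwards never leaves `T`.
-/

theorem PMF.sum_coe_eq_one {X : Type*} [Fintype X] (p : PMF X) : ∑ x, p x = 1 := by
  simpa [tsum_fintype] using p.tsum_coe

theorem PMF.exists_inv_card_le {X : Type*} [Fintype X] (p : PMF X) :
    ∃ x, (Fintype.card X : ℝ≥0∞)⁻¹ ≤ p x := by
  have : Nonempty X := ⟨p.support_nonempty.some⟩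
  obtain ⟨x, -, hx⟩ := ENNReal.exists_le_of_sum_le (s := Finset.univ) Finset.univ_nonempty
    (f := fun _ => (Fintype.card X : ℝ≥0∞)⁻¹) (g := p) <| by
      rw [p.sum_coe_eq_one, Finset.sum_const, Finset.card_univ, nsmul_eq_mul,
        ENNReal.mul_inv_cancel (by simp) (by simp)]
  exact ⟨x, hx⟩

theorem List.forall_mem_drop_iff {α : Type*} {p : α → Prop} {xs : List α} {k : ℕ} :
    (∀ x ∈ xs.drop k, p x) ↔ ∀ j (hj : j < xs.length), k ≤ j → p xs[j] := by
  refine ⟨fun H j hj hkj => H _ (List.mem_drop_iff_getElem.2 ⟨j - k, by omega, ?_⟩), fun H x hx => ?_⟩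
  · congr 1; omega
  · obtain ⟨j, hj, rfl⟩ := List.mem_drop_iff_getElem.1 hx
    exact H _ _ (by omega)

namespace POMDP

open scoped Classical

section Histories

variable {L A : Type}

@[simp] def lastState : L → List (A × L) → L
  | t, [] => t
  | _, (_, t) :: h => lastState t h

theorem lastState_append (t : L) (g h : List (A × L)) :
    lastState t (g ++ h) = lastState (lastState t g) h := by
  induction g generalizing t with
  | nil => rfl
  | cons x g ih => exact ih x.2

theorem statesOf_append (t : L) (g h : List (A × L)) :
    statesOf t (g ++ h) = statesOf t g ++ h.map Prod.snd := by
  simp [statesOf]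

theorem drop_length_statesOf (t : L) (g : List (A × L)) :
    (statesOf t g).drop g.length = [lastState t g] := by
  induction g generalizing t with
  | nil => rfl
  | cons x g ih => simpa [statesOf] using ih x.2

variable [Fintype L] [Fintype A]

noncomputable def histSum (n : ℕ) (F : List (A × L) → ℝ≥0∞) : ℝ≥0∞ :=
  ∑ f : Fin n → A × L, F (List.ofFn f)

theorem histSum_zero (F : List (A × L) → ℝ≥0∞) : histSum 0 F = F [] := by
  simp [histSum]

theorem histSum_succ (n : ℕ) (F : List (A × L) → ℝ≥0∞) :
    histSum (n + 1) F = ∑ x, histSum n (fun h => F (x :: h)) := by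
  rw [histSum, ← (Fin.consEquiv fun _ => A × L).sum_comp, Fintype.sum_prod_type]
  simp [histSum, Fin.consEquiv, List.ofFn_succ]

theorem histSum_add (m n : ℕ) (F : List (A × L) → ℝ≥0∞) :
    histSum (m + n) F = histSum m (fun g => histSum n (fun h => F (g ++ h))) := by
  rw [histSum, ← (Fin.appendEquiv m n).sum_comp, Fintype.sum_prod_type]
  exact Finset.sum_congr rfl fun g _ => Finset.sum_congr rfl fun h _ =>
    congrArg F (List.ofFn_fin_append g h)

theorem histSum_mul_left (n : ℕ) (c : ℝ≥0∞) (F : List (A × L) → ℝ≥0∞) :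
    histSum n (fun h => c * F h) = c * histSum n F := by
  simp [histSum, Finset.mul_sum]

theorem histSum_mono {n : ℕ} {F G : List (A × L) → ℝ≥0∞}
    (hFG : ∀ h, h.length = n → F h ≤ G h) : histSum n F ≤ histSum n G :=
  Finset.sum_le_sum fun _ _ => hFG _ (List.length_ofFn)

theorem histSum_congr {n : ℕ} {F G : List (A × L) → ℝ≥0∞}
    (hFG : ∀ h, h.length = n → F h = G h) : histSum n F = histSum n G :=
  Finset.sum_congr rfl fun _ _ => hFG _ (List.length_ofFn)

theorem le_histSum (F : List (A × L) → ℝ≥0∞) (h : List (A × L)) : F h ≤ histSum h.length F := by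
  simpa [histSum, List.ofFn_get] using Finset.single_le_sum
    (f := fun f : Fin h.length → A × L => F (List.ofFn f)) (fun _ _ => zero_le)
    (Finset.mem_univ h.get)

end Histories

section Probabilities

variable {L A O : Type} (M : POMDP L A O)

theorem prefProbAux_cons (π : List (A × L) → PMF A) (t : L) (a : A) (t' : L)
    (h : List (A × L)) :
    M.prefProbAux π t ((a, t') :: h) =
      π [] a * M.δ t a t' * M.prefProbAux (fun h' => π ((a, t') :: h')) t' h := rfl

theorem prefProbAux_append (π : List (A × L) → PMF A) (t : L) (g h : List (A × L)) :
    M.prefProbAux π t (g ++ h) =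
      M.prefProbAux π t g * M.prefProbAux (fun h' => π (g ++ h')) (lastState t g) h := by
  induction g generalizing π t with
  | nil => simp [prefProbAux]
  | cons x g ih =>
    obtain ⟨a, t'⟩ := x
    simp only [List.cons_append, prefProbAux_cons, ih, lastState, mul_assoc]

variable [Fintype L] [Fintype A]

theorem histSum_prefProbAux (n : ℕ) (π : List (A × L) → PMF A) (t : L) :
    histSum n (M.prefProbAux π t) = 1 := by
  induction n generalizing π t with
  | zero => simp [histSum_zero, prefProbAux]
  | succ n ih =>
    simp only [histSum_succ, Fintype.sum_prod_type, prefProbAux_cons, histSum_mul_left, ih,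
      mul_one, ← Finset.mul_sum, PMF.sum_coe_eq_one]

theorem prefProbAux_le_one (π : List (A × L) → PMF A) (t : L) (h : List (A × L)) :
    M.prefProbAux π t h ≤ 1 :=
  (le_histSum _ h).trans_eq (M.histSum_prefProbAux _ π t)

noncomputable def histProb (π : List (A × L) → PMF A) (t : L) (n : ℕ)
    (P : List (A × L) → Prop) : ℝ≥0∞ :=
  histSum n fun h => if P h then M.prefProbAux π t h else 0

theorem horizonProb_eq_histProb (α : Strategy L A) (l : L) (n : ℕ) (P : List (A × L) → Prop) :
    M.horizonProb α l n P = M.histProb (α l) l n P := by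
  refine Finset.sum_congr rfl fun f _ => ?_
  simp [Set.indicator_apply, prefProb]

theorem histProb_add_histProb_not (π : List (A × L) → PMF A) (t : L) (n : ℕ)
    (P : List (A × L) → Prop) :
    M.histProb π t n P + M.histProb π t n (fun h => ¬ P h) = 1 := by
  rw [histProb, histProb, histSum, histSum, ← Finset.sum_add_distrib, ← M.histSum_prefProbAux n π t]
  refine Finset.sum_congr rfl fun f _ => ?_
  split_ifs <;> simp

theorem histProb_le_one (π : List (A × L) → PMF A) (t : L) (n : ℕ) (P : List (A × L) → Prop) :
    M.histProb π t n P ≤ 1 :=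
  (M.histProb_add_histProb_not π t n P).le.trans' le_self_add

theorem histProb_le_one_sub {π : List (A × L) → PMF A} {t : L} {n : ℕ}
    {P : List (A × L) → Prop} {c : ℝ≥0∞} (hc : c ≤ M.histProb π t n (fun h => ¬ P h)) :
    M.histProb π t n P ≤ 1 - c := by
  rw [ENNReal.eq_sub_of_add_eq ((M.histProb_le_one π t n _).trans_lt ENNReal.one_lt_top).ne
    (M.histProb_add_histProb_not π t n P)]
  exact tsub_le_tsub_left hc 1

theorem histProb_eq_one {π : List (A × L) → PMF A} {t : L} {n : ℕ} {P : List (A × L) → Prop}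
    (hP : ∀ h, h.length = n → M.prefProbAux π t h ≠ 0 → P h) : M.histProb π t n P = 1 := by
  rw [histProb, ← M.histSum_prefProbAux n π t]
  refine histSum_congr fun h hn => ?_
  by_cases h0 : M.prefProbAux π t h = 0
  · simp [h0]
  · simp [hP h hn h0]

theorem mul_histProb_le_histProb_succ {π : List (A × L) → PMF A} {t : L} {n : ℕ} (a : A) (t' : L)
    {P Q : List (A × L) → Prop} (hQP : ∀ h, Q h → P ((a, t') :: h)) :
    π [] a * M.δ t a t' * M.histProb (fun h => π ((a, t') :: h)) t' n Q ≤
      M.histProb π t (n + 1) P := by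
  rw [histProb, ← histSum_mul_left, histProb, histSum_succ]
  refine le_trans ?_ (Finset.single_le_sum (fun _ _ => zero_le) (Finset.mem_univ (a, t')))
  refine histSum_mono fun h _ => ?_
  by_cases hQ : Q h
  · simp [hQ, hQP h hQ, prefProbAux_cons]
  · simp [hQ]

end Probabilities

section CoBuchi

variable {L A O : Type} (T : Set L)

def IsSafe (t : L) (h : List (A × L)) : Prop := ∀ s ∈ statesOf t h, s ∈ T

def StaysFrom (k : ℕ) (l : L) (h : List (A × L)) : Prop := ∀ s ∈ (statesOf l h).drop k, s ∈ T

theorem isSafe_cons (t : L) (a : A) (t' : L) (h : List (A × L)) :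
    IsSafe T t ((a, t') :: h) ↔ t ∈ T ∧ IsSafe T t' h := by
  simp [IsSafe, statesOf]

theorem staysFrom_of_length_lt {k : ℕ} (l : L) {h : List (A × L)} (hk : h.length < k) :
    StaysFrom T k l h := by
  simp [StaysFrom, List.drop_eq_nil_of_le (by simp [statesOf]; omega : (statesOf l h).length ≤ k)]

theorem staysFrom_length_iff (l : L) (g : List (A × L)) :
    StaysFrom T g.length l g ↔ lastState l g ∈ T := by
  simp [StaysFrom, drop_length_statesOf]

theorem staysFrom_append {k : ℕ} (l : L) {g : List (A × L)} (h : List (A × L))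
    (hk : k ≤ g.length) :
    StaysFrom T k l (g ++ h) ↔ StaysFrom T k l g ∧ IsSafe T (lastState l g) h := by
  have hlast : lastState l g ∈ (statesOf l g).drop k :=
    (List.drop_sublist_drop_left _ hk).subset (by simp [drop_length_statesOf])
  rw [StaysFrom, StaysFrom, IsSafe, statesOf_append,
    List.drop_append_of_le_length (by simp [statesOf]; omega), List.forall_mem_append]
  simp only [statesOf, List.forall_mem_cons]
  exact ⟨fun ⟨h₁, h₂⟩ => ⟨h₁, h₁ _ hlast, h₂⟩, fun ⟨h₁, _, h₂⟩ => ⟨h₁, h₂⟩⟩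

variable (M : POMDP L A O) [Fintype L] [Fintype A]

theorem coBuchiProb_eq (α : Strategy L A) (l : L) :
    M.coBuchiProb α l T = ⨆ k, ⨅ n, M.horizonProb α l n (StaysFrom T k l) := by
  have hstays : ∀ k, StaysFrom T k l = fun h : List (A × L) => ∀ j (hj : j < (statesOf l h).length),
      k ≤ j → (statesOf l h).get ⟨j, hj⟩ ∈ T :=
    fun k => funext fun h => propext List.forall_mem_drop_iff
  simp only [hstays]
  rfl

theorem histSum_staysFrom_append {k : ℕ} (π : List (A × L) → PMF A) (t : L) {g : List (A × L)}
    (hk : k ≤ g.length) (n : ℕ) :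
    histSum n (fun h => if StaysFrom T k t (g ++ h) then M.prefProbAux π t (g ++ h) else 0) =
      if StaysFrom T k t g then
        M.prefProbAux π t g * M.histProb (fun h => π (g ++ h)) (lastState t g) n
          (IsSafe T (lastState t g))
      else 0 := by
  split_ifs with hg
  · rw [histProb, ← histSum_mul_left]
    refine histSum_congr fun h _ => ?_
    simp only [staysFrom_append T t h hk, hg, true_and, prefProbAux_append]
    split_ifs <;> simp
  · simp [histSum, staysFrom_append T t _ hk, hg]

theorem prefProb_le_coBuchiProb (α : Strategy L A) (l : L) (g : List (A × L))
    (hsafe : ∀ h, M.prefProbAux (fun h' => α l (g ++ h')) (lastState l g) h ≠ 0 →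
      IsSafe T (lastState l g) h) :
    M.prefProb α l g ≤ M.coBuchiProb α l T := by
  rw [coBuchiProb_eq]
  refine le_iSup_of_le g.length (le_iInf fun n => ?_)
  rw [horizonProb_eq_histProb]
  rcases lt_or_ge n g.length with hn | hn
  · rw [M.histProb_eq_one fun h hh _ => staysFrom_of_length_lt T l (hh ▸ hn)]
    exact M.prefProbAux_le_one _ _ _
  obtain ⟨j, rfl⟩ := Nat.exists_eq_add_of_le hn
  have hstays : StaysFrom T g.length l g :=
    (staysFrom_length_iff T l g).2 (hsafe [] one_ne_zero _ (List.mem_singleton_self _))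
  calc M.prefProb α l g
      = M.prefProbAux (α l) l g * M.histProb (fun h => α l (g ++ h)) (lastState l g) j
          (IsSafe T (lastState l g)) := by
        rw [M.histProb_eq_one fun h _ => hsafe h, mul_one, prefProb]
    _ = histSum j (fun h => if StaysFrom T g.length l (g ++ h)
          then M.prefProbAux (α l) l (g ++ h) else 0) := by
        rw [M.histSum_staysFrom_append T _ _ le_rfl, if_pos hstays]
    _ ≤ M.histProb (α l) l (g.length + j) (StaysFrom T g.length l) := by
        rw [histProb, histSum_add]
        exact le_histSum (fun g' => histSum j fun h => if StaysFrom T g.length l (g' ++ h)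
          then M.prefProbAux (α l) l (g' ++ h) else 0) g

end CoBuchi

section Beliefs

variable {L A O : Type} [Fintype L] (M : POMDP L A O) (T : Set L)

noncomputable def successors (B : Finset L) (a : A) : Finset L :=
  Finset.univ.filter fun t' => ∃ t ∈ B, M.δ t a t' ≠ 0

noncomputable def post (B : Finset L) (a : A) (o : O) : Finset L :=
  (M.successors B a).filter (M.obs · = o)

theorem mem_post {B : Finset L} {a : A} {o : O} {t' : L} :
    t' ∈ M.post B a o ↔ (∃ t ∈ B, M.δ t a t' ≠ 0) ∧ M.obs t' = o := by
  simp [post, successors]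

/-- The beliefs from which the controller can keep the first `i` states of every consistent play
in `T`. -/
def safeSeq : ℕ → Set (Finset L)
  | 0 => Set.univ
  | i + 1 => {B | ↑B ⊆ T ∧ ∃ a, ∀ o, M.post B a o ∈ safeSeq i}

theorem safeSeq_antitone : Antitone (M.safeSeq T) := by
  refine antitone_nat_of_succ_le fun i => ?_
  induction i with
  | zero => exact Set.subset_univ _
  | succ i ih => exact fun B ⟨hBT, a, ha⟩ => ⟨hBT, a, fun o => ih (ha o)⟩

theorem empty_mem_safeSeq [Nonempty A] : ∀ i, ∅ ∈ M.safeSeq T i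
  | 0 => trivial
  | i + 1 => ⟨by simp, Classical.arbitrary A, fun o => by
      simpa [post, successors] using empty_mem_safeSeq i⟩

def safeBeliefs : Set (Finset L) := ⋂ i, M.safeSeq T i

theorem exists_safeSeq_eq_safeBeliefs : ∃ I, ∀ j, I ≤ j → M.safeSeq T j = M.safeBeliefs T := by
  obtain ⟨I, hI⟩ := WellFoundedLT.antitone_chain_condition (M.safeSeq_antitone T)
  refine ⟨I, fun j hj => Set.Subset.antisymm (fun B hB => Set.mem_iInter.2 fun i => ?_)
    (Set.iInter_subset _ j)⟩
  rcases le_total i j with hij | hji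
  · exact M.safeSeq_antitone T hij hB
  · rwa [← hI i (hj.trans hji), hI j hj]

theorem safeBeliefs_spec {B : Finset L} (hB : B ∈ M.safeBeliefs T) :
    ↑B ⊆ T ∧ ∃ a, ∀ o, M.post B a o ∈ M.safeBeliefs T := by
  obtain ⟨I, hI⟩ := M.exists_safeSeq_eq_safeBeliefs T
  obtain ⟨hBT, a, ha⟩ : B ∈ M.safeSeq T (I + 1) := by rwa [hI _ I.le_succ]
  exact ⟨hBT, a, fun o => hI I le_rfl ▸ ha o⟩

noncomputable def safeAction [Nonempty A] (B : Finset L) : A :=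
  Classical.epsilon fun a => ∀ o, M.post B a o ∈ M.safeBeliefs T

theorem post_safeAction_mem [Nonempty A] {B : Finset L} (hB : B ∈ M.safeBeliefs T) (o : O) :
    M.post B (M.safeAction T B) o ∈ M.safeBeliefs T :=
  Classical.epsilon_spec (M.safeBeliefs_spec T hB).2 o

end Beliefs

section Escape

variable {L A O : Type} [Fintype L] [Fintype A] (M : POMDP L A O) (T : Set L)

noncomputable def minTransProb : ℝ≥0∞ :=
  1 ⊓ Finset.univ.inf fun x : L × A × L =>
    if M.δ x.1 x.2.1 x.2.2 = 0 then 1 else M.δ x.1 x.2.1 x.2.2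

/-- A lower bound on the probability that a step plays a most likely action and then takes a given
possible transition. -/
noncomputable def minStepProb : ℝ≥0∞ := M.minTransProb * (Fintype.card A : ℝ≥0∞)⁻¹

theorem minStepProb_ne_zero : M.minStepProb ≠ 0 := by
  refine mul_ne_zero (lt_inf_iff.2 ⟨zero_lt_one, ?_⟩).ne' (by simp)
  refine (Finset.lt_inf_iff (by simp)).2 fun x _ => ?_
  split_ifs with h
  · exact zero_lt_one
  · exact pos_iff_ne_zero.2 h

theorem minStepProb_le_one [Nonempty A] : M.minStepProb ≤ 1 :=
  mul_le_one' inf_le_left (ENNReal.inv_le_one.2 (by simp [Nat.one_le_iff_ne_zero]))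

theorem minStepProb_le_mul {ν : PMF A} {a : A} {t t' : L}
    (hν : (Fintype.card A : ℝ≥0∞)⁻¹ ≤ ν a) (hδ : M.δ t a t' ≠ 0) :
    M.minStepProb ≤ ν a * M.δ t a t' := by
  rw [minStepProb, mul_comm]
  refine mul_le_mul' hν (inf_le_right.trans ((Finset.inf_le (Finset.mem_univ (t, a, t'))).trans ?_))
  simp [hδ]

/-- Induction on `i`: a most likely first action leads, under some observation, to a belief outside
`safeSeq T (i - 1)`. -/
theorem exists_minStepProb_pow_le_escape [Nonempty A] (i : ℕ) :
    ∀ α : Strategy L A, M.ObservationBased α → ∀ B ∉ M.safeSeq T i,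
      (∀ s ∈ B, ∀ s' ∈ B, M.obs s = M.obs s') →
      ∃ t ∈ B, M.minStepProb ^ i ≤ M.histProb (α t) t i (fun h => ¬ IsSafe T t h) := by
  induction i with
  | zero => exact fun _ _ B hB => absurd trivial hB
  | succ i ih =>
    intro α hα B hB hobs
    by_cases hBT : ↑B ⊆ T
    swap
    · obtain ⟨t, htB, htT⟩ := Set.not_subset.1 hBT
      refine ⟨t, htB, ?_⟩
      rw [M.histProb_eq_one (P := fun h => ¬ IsSafe T t h) fun h _ _ hsafe =>
        htT (hsafe t List.mem_cons_self)]
      exact pow_le_one₀ zero_le M.minStepProb_le_one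
    have hstuck : ∀ a, ∃ o, M.post B a o ∉ M.safeSeq T i := by
      by_contra! h
      exact hB ⟨hBT, h⟩
    obtain ⟨t₀, ht₀⟩ : B.Nonempty :=
      Finset.nonempty_iff_ne_empty.2 (by rintro rfl; exact hB (M.empty_mem_safeSeq T _))
    obtain ⟨a, ha⟩ := (α t₀ []).exists_inv_card_le
    obtain ⟨o, ho⟩ := hstuck a
    obtain ⟨t', ht', hesc⟩ := ih (fun s h => α t₀ ((a, s) :: h))
      (fun s s' h h' hs hf ho => hα _ _ _ _ rfl (by simp [hf]) (by simp [hs, ho]))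
      (M.post B a o) ho
      (fun s hs s' hs' => ((M.mem_post).1 hs).2.trans ((M.mem_post).1 hs').2.symm)
    obtain ⟨⟨t, htB, hδ⟩, -⟩ := (M.mem_post).1 ht'
    have hαt : α t = α t₀ := funext fun h => hα _ _ _ _ (hobs t htB t₀ ht₀) rfl rfl
    refine ⟨t, htB, ?_⟩
    calc M.minStepProb ^ (i + 1) = M.minStepProb * M.minStepProb ^ i := pow_succ' _ _
      _ ≤ α t [] a * M.δ t a t' *
          M.histProb (fun h => α t ((a, t') :: h)) t' i (fun h => ¬ IsSafe T t' h) := by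
        rw [hαt]
        exact mul_le_mul' (M.minStepProb_le_mul ha hδ) hesc
      _ ≤ M.histProb (α t) t (i + 1) (fun h => ¬ IsSafe T t h) :=
        M.mul_histProb_le_histProb_succ a t' fun h hh hsafe => hh ((isSafe_cons T t a t' h).1 hsafe).2

theorem horizonProb_add_le [Nonempty A] {α : Strategy L A} (hα : M.ObservationBased α) {l : L}
    {I : ℕ} (hI : ∀ g, M.Consistent α l g → ({lastState l g} : Finset L) ∉ M.safeSeq T I)
    {k m : ℕ} (hkm : k ≤ m) :
    M.horizonProb α l (m + I) (StaysFrom T k l) ≤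
      (1 - M.minStepProb ^ I) * M.horizonProb α l m (StaysFrom T k l) := by
  rw [horizonProb_eq_histProb, horizonProb_eq_histProb, histProb, histSum_add, histProb,
    ← histSum_mul_left]
  refine histSum_mono fun g hg => ?_
  rw [M.histSum_staysFrom_append T _ _ (hg ▸ hkm)]
  split_ifs
  swap
  · simp
  rcases eq_or_ne (M.prefProbAux (α l) l g) 0 with h0 | h0
  · simp [h0]
  rw [mul_comm]
  refine mul_le_mul_left (M.histProb_le_one_sub ?_) _
  obtain ⟨t, ht, hesc⟩ := M.exists_minStepProb_pow_le_escape T I (fun _ h => α l (g ++ h))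
    (fun _ _ h h' _ hf hs => hα _ _ _ _ rfl (by simp [hf]) (by simp [hs]))
    {lastState l g} (hI g (pos_iff_ne_zero.2 h0)) (by simp)
  rwa [Finset.mem_singleton.1 ht] at hesc

theorem exists_consistent_singleton_mem_safeBeliefs [Nonempty A] {α : Strategy L A}
    (hα : M.ObservationBased α) {l : L} (hpos : 0 < M.coBuchiProb α l T) :
    ∃ g, M.Consistent α l g ∧ ({lastState l g} : Finset L) ∈ M.safeBeliefs T := by
  by_contra! hnone
  obtain ⟨I, hI⟩ := M.exists_safeSeq_eq_safeBeliefs T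
  rw [coBuchiProb_eq] at hpos
  obtain ⟨k, hk⟩ := lt_iSup_iff.1 hpos
  set d := 1 - M.minStepProb ^ I
  have hd : d < 1 :=
    ENNReal.sub_lt_self ENNReal.one_ne_top one_ne_zero (pow_ne_zero _ M.minStepProb_ne_zero)
  have hdecay : ∀ r, M.horizonProb α l (k + r * I) (StaysFrom T k l) ≤ d ^ r := by
    intro r
    induction r with
    | zero => simpa [horizonProb_eq_histProb] using M.histProb_le_one _ _ _ _
    | succ r ih =>
      calc M.horizonProb α l (k + (r + 1) * I) (StaysFrom T k l)
          = M.horizonProb α l (k + r * I + I) (StaysFrom T k l) := by rw [add_mul, one_mul, add_assoc]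
        _ ≤ d * M.horizonProb α l (k + r * I) (StaysFrom T k l) :=
          M.horizonProb_add_le T hα (fun g hg => hI I le_rfl ▸ hnone g hg) (Nat.le_add_right _ _)
        _ ≤ d ^ (r + 1) := by
          rw [pow_succ']
          exact mul_le_mul' le_rfl ih
  obtain ⟨r, hr⟩ := ((ENNReal.tendsto_pow_atTop_nhds_zero_of_lt_one hd).eventually_lt_const hk).exists
  exact hr.not_ge ((iInf_le _ _).trans (hdecay r))

end Escape

section Paths

variable {L A O : Type} (M : POMDP L A O)

def IsPath : L → List (A × L) → Prop
  | _, [] => True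
  | t, (a, t') :: h => M.δ t a t' ≠ 0 ∧ IsPath t' h

theorem isPath_append (t : L) (g h : List (A × L)) :
    M.IsPath t (g ++ h) ↔ M.IsPath t g ∧ M.IsPath (lastState t g) h := by
  induction g generalizing t with
  | nil => simp [IsPath]
  | cons x g ih => simp [IsPath, ih, and_assoc]

theorem isPath_of_prefProbAux_ne_zero (π : List (A × L) → PMF A) (t : L) (h : List (A × L))
    (hh : M.prefProbAux π t h ≠ 0) : M.IsPath t h := by
  induction h generalizing π t with
  | nil => trivial
  | cons x h ih =>
    obtain ⟨a, t'⟩ := x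
    rw [prefProbAux_cons, mul_ne_zero_iff, mul_ne_zero_iff] at hh
    exact ⟨hh.1.2, ih _ t' hh.2⟩

/-- A path whose states repeat can be shortened by cutting out the loop. -/
theorem IsPath.exists_length_lt [Fintype L] {l : L} {p : List (A × L)} (hp : M.IsPath l p) :
    ∃ p', M.IsPath l p' ∧ lastState l p' = lastState l p ∧ p'.length < Fintype.card L := by
  induction hn : p.length using Nat.strong_induction_on generalizing p with
  | _ n ih =>
  by_cases hlt : n < Fintype.card L
  · exact ⟨p, hp, rfl, hn ▸ hlt⟩
  obtain ⟨i, j, hij, heq⟩ := Fintype.exists_ne_map_eq_of_card_lt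
    (fun i : Fin (p.length + 1) => lastState l (p.take i)) (by simp; omega)
  wlog hlt' : i < j generalizing i j
  · exact this j i hij.symm heq.symm (lt_of_le_of_ne (not_lt.1 hlt') hij.symm)
  have hi := (M.isPath_append l (p.take i) (p.drop i)).1 ((List.take_append_drop i p).symm ▸ hp)
  have hj := (M.isPath_append l (p.take j) (p.drop j)).1 ((List.take_append_drop j p).symm ▸ hp)
  obtain ⟨p', hp', hlast, hlen⟩ := ih (p.take i ++ p.drop j).length
    (by simp only [List.length_append, List.length_take, List.length_drop]; omega)
    ((M.isPath_append l _ _).2 ⟨hi.1, heq ▸ hj.2⟩) rfl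
  refine ⟨p', hp', ?_, hlen⟩
  rw [hlast, lastState_append, heq, ← lastState_append, List.take_append_drop]

end Paths

section FiniteMemory

variable {L A O : Type} (M : POMDP L A O) {Mem : Type} (u : Mem → O → A → Mem)
  (nx : Mem → O → PMF A)

theorem fmStrategy_append (m : Mem) (t : L) (g h : List (A × L)) :
    M.fmStrategy u nx m t (g ++ h) = M.fmStrategy u nx (M.memRun u m t g).1 (lastState t g) h := by
  induction g generalizing m t with
  | nil => rfl
  | cons x g ih => exact ih _ _

theorem prefProbAux_fmStrategy_cons (m : Mem) (t : L) (a : A) (t' : L) (h : List (A × L)) :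
    M.prefProbAux (M.fmStrategy u nx m t) t ((a, t') :: h) =
      nx m (M.obs t) a * M.δ t a t' * M.prefProbAux (M.fmStrategy u nx (u m (M.obs t) a) t') t' h :=
  rfl

theorem memRun_congr_obs : ∀ (h h' : List (A × L)) (m : Mem) (t t' : L), M.obs t = M.obs t' →
    h.map Prod.fst = h'.map Prod.fst →
    h.map (fun p => M.obs p.2) = h'.map (fun p => M.obs p.2) →
    (M.memRun u m t h).1 = (M.memRun u m t' h').1 ∧
      M.obs (M.memRun u m t h).2 = M.obs (M.memRun u m t' h').2
  | [], [], _, _, _, ho, _, _ => ⟨rfl, ho⟩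
  | (a, s) :: h, (a', s') :: h', m, t, t', ho, hf, hs => by
    simp only [List.map_cons, List.cons.injEq] at hf hs
    obtain ⟨rfl, hf⟩ := hf
    simp only [memRun, ho]
    exact memRun_congr_obs h h' _ s s' hs.1 hf hs.2
  | [], _ :: _, _, _, _, _, hf, _ => by simp at hf
  | _ :: _, [], _, _, _, _, hf, _ => by simp at hf

theorem fmStrategy_observationBased (m : Mem) : M.ObservationBased (M.fmStrategy u nx m) :=
  fun t t' h h' ho hf hs =>
    let hrun := M.memRun_congr_obs u h h' m t t' ho hf hs
    congrArg₂ nx hrun.1 hrun.2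

end FiniteMemory

section Plan

variable {L A O : Type} [Fintype L] (M : POMDP L A O) (T : Set L) (acts : List A)

/-- Memory `(j, B)`: while `j < |acts|` count the steps; afterwards `B` is the belief before the
current observation. -/
noncomputable def planUpdate (m : Fin (acts.length + 1) × Finset L) (o : O) (a : A) :
    Fin (acts.length + 1) × Finset L :=
  if h : (m.1 : ℕ) < acts.length then (⟨m.1 + 1, by omega⟩, m.2)
  else (m.1, M.successors (m.2.filter (M.obs · = o)) a)

theorem memRun_planUpdate (B : Finset L) :
    ∀ (g : List (A × L)) (t : L) (j : ℕ) (hj : j + g.length ≤ acts.length),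
      M.memRun (M.planUpdate acts) (⟨j, by omega⟩, B) t g =
        ((⟨j + g.length, by omega⟩, B), lastState t g)
  | [], _, _, _ => rfl
  | (a, t') :: g, t, j, hj => by
    have hj' : j < acts.length := by simp at hj; omega
    simp only [memRun, planUpdate, dif_pos hj']
    rw [memRun_planUpdate B g t' (j + 1) (by simp at hj; omega)]
    simp only [List.length_cons, lastState, Prod.mk.injEq, Fin.mk.injEq, and_true]
    omega

variable [Nonempty A]

noncomputable def planNext (m : Fin (acts.length + 1) × Finset L) (o : O) : A :=
  if h : (m.1 : ℕ) < acts.length then acts[(m.1 : ℕ)]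
  else M.safeAction T (m.2.filter (M.obs · = o))

noncomputable abbrev planStrategy (m : Fin (acts.length + 1) × Finset L) : Strategy L A :=
  M.fmStrategy (M.planUpdate acts) (fun m o => PMF.pure (M.planNext T acts m o)) m

theorem prefProbAux_planStrategy_ne_zero (B : Finset L) :
    ∀ (g : List (A × L)) (t : L) (j : Fin (acts.length + 1)), g.map Prod.fst = acts.drop j →
      M.IsPath t g → M.prefProbAux (M.planStrategy T acts (j, B) t) t g ≠ 0
  | [], _, _, _, _ => one_ne_zero
  | (a, t') :: g, t, j, hacts, hpath => by
    have hj : (j : ℕ) < acts.length := by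
      by_contra hj
      simp [List.drop_eq_nil_of_le (not_lt.1 hj)] at hacts
    rw [List.drop_eq_getElem_cons hj, List.map_cons, List.cons.injEq] at hacts
    rw [prefProbAux_fmStrategy_cons]
    simp only [planNext, planUpdate, dif_pos hj, ← hacts.1, PMF.pure_apply_self, one_mul]
    exact mul_ne_zero hpath.1
      (prefProbAux_planStrategy_ne_zero B g t' ⟨j + 1, by omega⟩ hacts.2 hpath.2)

theorem isSafe_of_prefProbAux_planStrategy_ne_zero :
    ∀ (g : List (A × L)) (P : Finset L) (t : L), t ∈ P →
      P.filter (M.obs · = M.obs t) ∈ M.safeBeliefs T →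
      M.prefProbAux (M.planStrategy T acts (Fin.last _, P) t) t g ≠ 0 → IsSafe T t g
  | [], P, t, htP, hW, _ => by
    simpa [IsSafe, statesOf] using (M.safeBeliefs_spec T hW).1 (by simp [htP])
  | (a, t') :: g, P, t, htP, hW, hpos => by
    rw [prefProbAux_fmStrategy_cons] at hpos
    simp only [planNext, planUpdate, Fin.val_last, lt_irrefl, dite_false] at hpos
    obtain ⟨⟨hact, hδ⟩, hrest⟩ := mul_ne_zero_iff.1 hpos |>.imp_left mul_ne_zero_iff.1
    obtain rfl : a = M.safeAction T (P.filter (M.obs · = M.obs t)) := by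
      simpa [PMF.pure_apply] using hact
    have htB : t ∈ P.filter (M.obs · = M.obs t) := Finset.mem_filter.2 ⟨htP, rfl⟩
    refine (isSafe_cons T t _ t' g).2 ⟨(M.safeBeliefs_spec T hW).1 htB, ?_⟩
    exact isSafe_of_prefProbAux_planStrategy_ne_zero g _ t'
      (Finset.mem_filter.2 ⟨Finset.mem_univ _, t, htB, hδ⟩) (M.post_safeAction_mem T hW (M.obs t')) hrest

theorem planStrategy_coBuchiProb_pos [Fintype A] {l : L} {p : List (A × L)} (hp : M.IsPath l p)
    (hW : ({lastState l p} : Finset L) ∈ M.safeBeliefs T) :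
    0 < M.coBuchiProb (M.planStrategy T (p.map Prod.fst) (0, {lastState l p})) l T := by
  have hrun : M.memRun (M.planUpdate (p.map Prod.fst)) (0, {lastState l p}) l p =
      ((Fin.last _, {lastState l p}), lastState l p) := by
    rw [show (0 : Fin _) = ⟨0, by simp⟩ from rfl, M.memRun_planUpdate _ _ p l 0 (by simp)]
    simp [Fin.ext_iff]
  refine (pos_iff_ne_zero.2 (M.prefProbAux_planStrategy_ne_zero T _ _ p l 0 (by simp) hp)).trans_le
    (M.prefProb_le_coBuchiProb T _ l p fun h hh => ?_)
  simp only [fmStrategy_append, hrun] at hh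
  exact M.isSafe_of_prefProbAux_planStrategy_ne_zero T _ h _ _ (Finset.mem_singleton_self _)
    (by simpa [Finset.filter_singleton] using hW) hh

end Plan

end POMDP

/-- If there is an observation-based strategy positive winning for
`coBüchi(T)` from `l`, then there is a pure observation-based finite-memory
strategy, with memory of size at most `(|L|+1) · 2^{|L|}`, that is positive
winning for `coBüchi(T)` from `l`. -/
theorem positive_cobuchi_pure_exponential_memory {L A O : Type} [Fintype L] [Fintype A]
    (M : POMDP L A O) (T : Set L) (l : L)
    (h : ∃ α : POMDP.Strategy L A, M.ObservationBased α ∧ 0 < M.coBuchiProb α l T) :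
    ∃ (Mem : Type) (iM : Fintype Mem) (m0 : Mem) (u : Mem → O → A → Mem)
      (next : Mem → O → A),
      @Fintype.card Mem iM ≤ (Fintype.card L + 1) * 2 ^ Fintype.card L ∧
      POMDP.PureStrategy (M.fmStrategy u (fun m o => PMF.pure (next m o)) m0) ∧
      M.ObservationBased (M.fmStrategy u (fun m o => PMF.pure (next m o)) m0) ∧
      0 < M.coBuchiProb (M.fmStrategy u (fun m o => PMF.pure (next m o)) m0) l T := by
  obtain ⟨α, hα, hpos⟩ := h
  have : Nonempty A := ⟨(α l []).support_nonempty.some⟩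
  obtain ⟨g, hg, hW⟩ := M.exists_consistent_singleton_mem_safeBeliefs T hα hpos
  obtain ⟨p, hp, hlast, hlen⟩ := (M.isPath_of_prefProbAux_ne_zero _ _ _ hg.ne').exists_length_lt
  rw [← hlast] at hW
  refine ⟨Fin ((p.map Prod.fst).length + 1) × Finset L, inferInstance, (0, {POMDP.lastState l p}),
    M.planUpdate _, M.planNext T _, ?_, fun _ _ => ⟨_, rfl⟩, M.fmStrategy_observationBased _ _ _,
    M.planStrategy_coBuchiProb_pos T hp hW⟩
  simp only [Fintype.card_prod, Fintype.card_fin, Fintype.card_finset, List.length_map]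
  exact Nat.mul_le_mul_right _ (by omega)
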